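/- arXiv:1710.10311 — 5 statements merged into one kernel-verified Lean document; each statement's English description precedes it below -/
import Mathlib

section
/- For real numbers a ≠ b and x > 0, the function f(y) = max(a·y, b·y) satisfies f(y) ≤ f'(x)·(y−x) + f(x) + (C/2)·(y−x)² for all y ∈ ℝ, where C = |a−b|/(2x). -/
theorem aux0 (a b x : ℝ) (h : a ≤ b) (hx : 0 < x) :
    ∀ y : ℝ, max (a * y) (b * y) ≤
      max a b * (y - x) + max (a * x) (b * x) +
        (|a - b| / (2 * x)) / 2 * (y - x) ^ 2 := by
  intro y
  have hax : max (a*x) (b*x) = b*x := max_eq_right (by nlinarith)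
  have hmab : max a b = b := max_eq_right h
  have habs : |a-b| = b-a := by rw [abs_sub_comm]; exact abs_of_nonneg (by linarith)
  have hx' : x ≠ 0 := hx.ne'
  have hC : (b-a)/(2*x)/2 * (4*x) = b-a := by rw [div_div, div_mul_eq_mul_div, div_eq_iff (by positivity : (2*x*2) ≠ 0)]; ring
  rcases le_total 0 y with hy | hy
  · have hm : max (a*y) (b*y) = b*y := max_eq_right (by nlinarith)
    rw [hm, hax, hmab, habs]
    have : 0 ≤ (b-a)/(2*x)/2 * (y-x)^2 :=
      mul_nonneg (div_nonneg (div_nonneg (by linarith) (by linarith)) (by norm_num)) (sq_nonneg _)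
    nlinarith
  · have hm : max (a*y) (b*y) = a*y := max_eq_left (by nlinarith)
    rw [hm, hax, hmab, habs]
    nlinarith [mul_nonneg (sub_nonneg.2 h) (sq_nonneg (y+x)), sq_nonneg (y-x), hx]

theorem stmt_0 (a b x : ℝ) (hab : a ≠ b) (hx : 0 < x) :
    ∀ y : ℝ, max (a * y) (b * y) ≤
      max a b * (y - x) + max (a * x) (b * x) +
        (|a - b| / (2 * x)) / 2 * (y - x) ^ 2 := by
  rcases le_total a b with h | h
  · exact aux0 a b x h hx
  · intro y
    have := aux0 b a x h hx y
    simpa [max_comm, abs_sub_comm] using this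
end

section
/- The constant C = |a−b|/(2x) is the smallest constant for which the quadratic upper bound holds: for a ≠ b and x > 0, if f(y) ≤ f'(x)·(y−x) + f(x) + (C'/2)·(y−x)² for all y ∈ ℝ where f(y) = max(a·y, b·y), then C' ≥ |a−b|/(2x). -/
theorem stmt_1 (a b x C' : ℝ) (hab : a ≠ b) (hx : 0 < x) (hC' : 0 ≤ C')
    (h : ∀ y : ℝ, max (a * y) (b * y) ≤
      max a b * (y - x) + max (a * x) (b * x) + C' / 2 * (y - x) ^ 2) :
    C' ≥ |a - b| / (2 * x) := by
  have h1 := h (-x)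
  rw [ge_iff_le, div_le_iff₀ (by positivity)]
  rcases le_total a b with hle | hle
  · rw [abs_of_nonpos (by linarith)]
    have h2 : max a b = b := max_eq_right hle
    have h3 : max (a * x) (b * x) = b * x := max_eq_right (by nlinarith)
    have h4 : max (a * (-x)) (b * (-x)) = a * (-x) := max_eq_left (by nlinarith)
    rw [h2, h3, h4] at h1
    nlinarith [sq_nonneg x]
  · rw [abs_of_nonneg (by linarith)]
    have h2 : max a b = a := max_eq_left hle
    have h3 : max (a * x) (b * x) = a * x := max_eq_left (by nlinarith)
    have h4 : max (a * (-x)) (b * (-x)) = b * (-x) := max_eq_right (by nlinarith)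
    rw [h2, h3, h4] at h1
    nlinarith [sq_nonneg x]
end

section
/- For q = (q₁, q₂) ∈ ℝ² with q₁ ≠ q₂, the function f(y) = max(y₁, y₂) satisfies the semiconcavity bound f(y) ≤ ∇f(q)·y + (1/(2|q₁−q₂|))·‖y−q‖² for all y ∈ ℝ², where ∇f(q) is the gradient of f at q (equal to e₁ if q₁ > q₂ and e₂ if q₂ > q₁). -/
theorem stmt_2 (q : EuclideanSpace ℝ (Fin 2)) (hq : q 0 ≠ q 1) :
    ∀ y : EuclideanSpace ℝ (Fin 2),
      max (y 0) (y 1) ≤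
        (if q 0 > q 1 then y 0 else y 1) +
          (1 / (2 * |q 0 - q 1|)) * ‖y - q‖ ^ 2 := by
  intro y
  have hnorm : ‖y - q‖ ^ 2 = (y 0 - q 0) ^ 2 + (y 1 - q 1) ^ 2 := by
    rw [EuclideanSpace.norm_eq, Real.sq_sqrt (by positivity)]
    simp [Fin.sum_univ_two]
  rw [hnorm]
  rcases lt_or_gt_of_ne hq with h | h
  · rw [if_neg (not_lt.mpr h.le)]
    have hd : (0:ℝ) < q 1 - q 0 := by linarith
    have habs : |q 0 - q 1| = q 1 - q 0 := by rw [abs_of_neg (by linarith)]; ring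
    rw [habs]
    have hS : (0:ℝ) ≤ (y 0 - q 0) ^ 2 + (y 1 - q 1) ^ 2 := by positivity
    have hnn : (0:ℝ) ≤ 1 / (2 * (q 1 - q 0)) * ((y 0 - q 0) ^ 2 + (y 1 - q 1) ^ 2) := by
      positivity
    rw [max_le_iff]
    refine ⟨?_, by linarith⟩
    have key : y 0 - y 1 ≤ ((y 0 - q 0) ^ 2 + (y 1 - q 1) ^ 2) / (2 * (q 1 - q 0)) := by
      rw [le_div_iff₀ (by linarith)]
      nlinarith [sq_nonneg (y 0 - y 1 - (q 1 - q 0)), sq_nonneg (y 0 - q 0 + (y 1 - q 1))]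
    have : 1 / (2 * (q 1 - q 0)) * ((y 0 - q 0) ^ 2 + (y 1 - q 1) ^ 2)
        = ((y 0 - q 0) ^ 2 + (y 1 - q 1) ^ 2) / (2 * (q 1 - q 0)) := by ring
    linarith
  · rw [if_pos h]
    have hd : (0:ℝ) < q 0 - q 1 := by linarith
    have habs : |q 0 - q 1| = q 0 - q 1 := abs_of_pos hd
    rw [habs]
    have hS : (0:ℝ) ≤ (y 0 - q 0) ^ 2 + (y 1 - q 1) ^ 2 := by positivity
    have hnn : (0:ℝ) ≤ 1 / (2 * (q 0 - q 1)) * ((y 0 - q 0) ^ 2 + (y 1 - q 1) ^ 2) := by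
      positivity
    rw [max_le_iff]
    refine ⟨by linarith, ?_⟩
    have key : y 1 - y 0 ≤ ((y 0 - q 0) ^ 2 + (y 1 - q 1) ^ 2) / (2 * (q 0 - q 1)) := by
      rw [le_div_iff₀ (by linarith)]
      nlinarith [sq_nonneg (y 1 - y 0 - (q 0 - q 1)), sq_nonneg (y 0 - q 0 + (y 1 - q 1))]
    have : 1 / (2 * (q 0 - q 1)) * ((y 0 - q 0) ^ 2 + (y 1 - q 1) ^ 2)
        = ((y 0 - q 0) ^ 2 + (y 1 - q 1) ^ 2) / (2 * (q 0 - q 1)) := by ring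
    linarith
end

section
/- The constant 1/|q₁−q₂| in the semiconcavity bound for f(y) = max(y₁,y₂) at a point q with q₁ ≠ q₂ is optimal: the extremal case occurs at y = (q₂, q₁), and for any C ≥ 0 such that max(y₁,y₂) ≤ ∇f(q)·y + (C/2)‖y−q‖² for all y ∈ ℝ², one has C ≥ 1/|q₁−q₂|. -/
lemma ite_gt_swap_eq_min {α : Type*} [LinearOrder α] (a b : α) :
    (if a > b then b else a) = min a b := by
  rw [min_comm, min_def]
  split_ifs <;> grind

lemma EuclideanSpace.norm_sq_swap_sub (q : EuclideanSpace ℝ (Fin 2)) :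
    ‖!₂[q 1, q 0] - q‖ ^ 2 = 2 * (q 0 - q 1) ^ 2 := by
  rw [EuclideanSpace.norm_sq_eq, Fin.sum_univ_two]
  simp only [PiLp.sub_apply, Matrix.cons_val_zero, Matrix.cons_val_one, Real.norm_eq_abs, sq_abs]
  ring

lemma one_div_abs_le_of_abs_le_mul_sq {K : Type*} [Field K] [LinearOrder K] [IsStrictOrderedRing K]
    {d C : K} (hd : d ≠ 0) (h : |d| ≤ C * d ^ 2) : 1 / |d| ≤ C := by
  have hpos : 0 < |d| := abs_pos.mpr hd
  rw [← sq_abs, sq, ← mul_assoc] at h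
  rw [div_le_iff₀ hpos]
  exact le_of_mul_le_mul_right (by rwa [one_mul]) hpos

theorem stmt_3_general (q : EuclideanSpace ℝ (Fin 2)) (hq : q 0 ≠ q 1) (C : ℝ)
    (h : ∀ y : EuclideanSpace ℝ (Fin 2),
      max (y 0) (y 1) ≤ (if q 0 > q 1 then y 0 else y 1) + C / 2 * ‖y - q‖ ^ 2) :
    C ≥ 1 / |q 0 - q 1| := by
  -- At the swapped point the left side exceeds the linear term by |q₀ - q₁|.
  have key := h !₂[q 1, q 0]
  simp only [Matrix.cons_val_zero, Matrix.cons_val_one] at key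
  rw [ite_gt_swap_eq_min, EuclideanSpace.norm_sq_swap_sub] at key
  have hgap : |q 0 - q 1| ≤ C * (q 0 - q 1) ^ 2 := by
    rw [← max_sub_min_eq_abs', max_comm]
    linarith
  exact one_div_abs_le_of_abs_le_mul_sq (sub_ne_zero.mpr hq) hgap

theorem stmt_3 (q : EuclideanSpace ℝ (Fin 2)) (hq : q 0 ≠ q 1) (C : ℝ) (hC : 0 ≤ C)
    (h : ∀ y : EuclideanSpace ℝ (Fin 2),
      max (y 0) (y 1) ≤ (if q 0 > q 1 then y 0 else y 1) + C / 2 * ‖y - q‖ ^ 2) :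
    C ≥ 1 / |q 0 - q 1| :=
  stmt_3_general q hq C h
end

section
/- Let a₁, a₂ ∈ ℝ with a₂ > a₁ and let g(q) = a₁·min(q₁,q₂) + a₂·max(q₁,q₂). For q ∈ ℝ² with q₁ ≠ q₂, g satisfies the semiconcavity estimate g(y) ≤ ∇g(q)·y + ((a₂−a₁)/(2|q₁−q₂|))·‖y−q‖² for all y ∈ ℝ², where ∇g(q) is the gradient of g at q. -/
theorem stmt_6 (a1 a2 : ℝ) (ha : a1 < a2)
    (q : EuclideanSpace ℝ (Fin 2)) (hq : q 0 ≠ q 1) :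
    ∀ y : EuclideanSpace ℝ (Fin 2),
      a1 * min (y 0) (y 1) + a2 * max (y 0) (y 1) ≤
        (if q 0 > q 1 then a2 * y 0 + a1 * y 1 else a1 * y 0 + a2 * y 1) +
          ((a2 - a1) / (2 * |q 0 - q 1|)) * ‖y - q‖ ^ 2 := by
  intro y
  have hN : ‖y - q‖ ^ 2 = (y 0 - q 0) ^ 2 + (y 1 - q 1) ^ 2 := by
    have h1 : ‖y - q‖ = Real.sqrt (∑ i : Fin 2, ‖(y - q) i‖ ^ 2) :=
      EuclideanSpace.norm_eq (y - q)
    rw [h1, Real.sq_sqrt (by positivity), Fin.sum_univ_two]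
    simp [PiLp.sub_apply, sq_abs]
  rw [hN]
  have habs : |q 0 - q 1| > 0 := abs_pos.mpr (sub_ne_zero.mpr hq)
  rw [← sub_le_iff_le_add', div_mul_eq_mul_div, le_div_iff₀ (by positivity)]
  rcases lt_or_gt_of_ne hq with h | h
  · rw [if_neg (not_lt.mpr h.le), abs_of_neg (sub_neg.mpr h)]
    rcases le_total (y 0) (y 1) with hy | hy
    · rw [min_eq_left hy, max_eq_right hy]
      nlinarith [sq_nonneg (y 0 - q 0 - (y 1 - q 1)), sq_nonneg (y 0 - q 0 + (y 1 - q 1))]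
    · rw [min_eq_right hy, max_eq_left hy]
      have h2 : 2*(y 0 - y 1)*(q 1 - q 0) ≤ (y 0 - q 0)^2 + (y 1 - q 1)^2 := by
        nlinarith [sq_nonneg (y 0 - q 0 + (y 1 - q 1)), sq_nonneg ((y 0 - y 1) - (q 1 - q 0))]
      have h3 := mul_le_mul_of_nonneg_left h2 (by linarith : (0:ℝ) ≤ a2 - a1)
      nlinarith [h3]
  · rw [if_pos h, abs_of_pos (sub_pos.mpr h)]
    rcases le_total (y 0) (y 1) with hy | hy
    · rw [min_eq_left hy, max_eq_right hy]
      have h2 : 2*(y 1 - y 0)*(q 0 - q 1) ≤ (y 0 - q 0)^2 + (y 1 - q 1)^2 := by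
        nlinarith [sq_nonneg (y 0 - q 0 + (y 1 - q 1)), sq_nonneg ((y 1 - y 0) - (q 0 - q 1))]
      have h3 := mul_le_mul_of_nonneg_left h2 (by linarith : (0:ℝ) ≤ a2 - a1)
      nlinarith [h3]
    · rw [min_eq_right hy, max_eq_left hy]
      nlinarith [sq_nonneg (y 0 - q 0 - (y 1 - q 1)), sq_nonneg (y 0 - q 0 + (y 1 - q 1))]
end
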